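/- Let T be a reduced set of permutations such that for every σ ∈ T, the permutation σ̂ (obtained from σ by swapping its first two entries) also lies in T. Then the map s_T on S_n is a bijection, with inverse r ∘ s_T ∘ r, where r is the reverse operation. -/

import Mathlib

open List

attribute [local instance] Classical.propDecidable

/-- `u` is order-isomorphic to `v`. -/
def OrdIso (u v : List ℕ) : Prop :=
  u.length = v.length ∧
    ∀ i j, i < u.length → j < u.length →
      (u.getD i 0 < u.getD j 0 ↔ v.getD i 0 < v.getD j 0)

/-- The word `w` contains the pattern `p`. -/
def Contains (w p : List ℕ) : Prop :=
  ∃ u, u.Sublist w ∧ OrdIso u p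

/-- The word `w` avoids every pattern in `T`. -/
def AvoidsSet (T : Set (List ℕ)) (w : List ℕ) : Prop :=
  ∀ p ∈ T, ¬ Contains w p

/-- One step of the `T`-avoiding stack machine: state is (input, stack, output);
the stack is read top to bottom (head is the top). -/
noncomputable def sTaux (T : Set (List ℕ)) : List ℕ → List ℕ → List ℕ → List ℕ
  | [], stack, out => out ++ stack
  | x :: rest, stack, out =>
    if AvoidsSet T (x :: stack) then sTaux T rest (x :: stack) out
    else
      match stack with
      | [] => sTaux T rest [x] out
      | y :: s => sTaux T (x :: rest) s (out ++ [y])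
termination_by input stack _ => 2 * input.length + stack.length
decreasing_by all_goals first | (simp_wf; omega) | omega | simp_wf

/-- The stack-sorting map `s_T`. -/
noncomputable def sT (T : Set (List ℕ)) (w : List ℕ) : List ℕ := sTaux T w [] []

/-- `w` is a permutation of `{1, …, w.length}`. -/
def IsPermList (w : List ℕ) : Prop := w.Perm (List.range' 1 w.length)

/-- `T` is reduced: no element of `T` contains another element of `T`. -/
def Reduced (T : Set (List ℕ)) : Prop :=
  ∀ σ ∈ T, ∀ τ ∈ T, σ ≠ τ → ¬ Contains σ τ

/-- `σ̂`: swap the first two entries of `σ`. -/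
def hat : List ℕ → List ℕ
  | a :: b :: t => b :: a :: t
  | l => l

/-!
Feed the reverse of the output of `s_T` back into `s_T`. The second run retraces the first one
backwards: a push is undone by a pop, and a pop of `y` off `y :: S`, forced by the input `x`,
is undone by pushing `y` back. For this the second machine has to pop `x` off `x :: S` when `y`
arrives, i.e. `y :: x :: S` must contain a pattern of `T`. It does: `x :: y :: S` contains some
`σ ∈ T` while the stacks `y :: S` and `x :: S` avoid `T`, so the occurrence uses both `x` and `y`,
and swapping them gives an occurrence of `σ̂ ∈ T` in `y :: x :: S`.
Hence `r ∘ s_T ∘ r ∘ s_T` and `s_T ∘ r ∘ s_T ∘ r` are both the identity.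
-/

section StackSorting

variable {T : Set (List ℕ)}

theorem Contains.mono {w w' p : List ℕ} (h : Contains w p) (hw : w <+ w') : Contains w' p :=
  let ⟨u, hu, hiso⟩ := h
  ⟨u, hu.trans hw, hiso⟩

theorem AvoidsSet.mono {w w' : List ℕ} (h : AvoidsSet T w') (hw : w <+ w') : AvoidsSet T w :=
  fun p hp hc => h p hp (hc.mono hw)

theorem Contains.length_le {w p : List ℕ} (h : Contains w p) : p.length ≤ w.length :=
  let ⟨_, hu, hiso⟩ := h
  hiso.1 ▸ hu.length_le

theorem contains_of_length_le_one {p : List ℕ} (hp : p.length ≤ 1) (x : ℕ) (s : List ℕ) :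
    Contains (x :: s) p := by
  match p, hp with
  | [], _ => exact ⟨[], nil_sublist _, rfl, fun i _ hi => by simp at hi⟩
  | [_], _ =>
    refine ⟨[x], (nil_sublist s).cons_cons x, rfl, fun i j hi hj => ?_⟩
    obtain rfl : i = 0 := by simpa using hi
    obtain rfl : j = 0 := by simpa using hj
    simp

theorem getD_swap_head (a b : ℕ) (v : List ℕ) (i : ℕ) :
    (b :: a :: v).getD i 0 = (a :: b :: v).getD (Equiv.swap 0 1 i) 0 := by
  match i with
  | 0 => simp
  | 1 => simp
  | n + 2 => rw [Equiv.swap_apply_of_ne_of_ne (by omega) (by omega)]; rfl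

theorem OrdIso.swap_head {a b : ℕ} {v σ : List ℕ} (h : OrdIso (a :: b :: v) σ) :
    OrdIso (b :: a :: v) (hat σ) := by
  obtain ⟨hlen, hcmp⟩ := h
  match σ, hlen with
  | c :: d :: t, hlen =>
    show OrdIso _ (d :: c :: t)
    refine ⟨by simpa using hlen, fun i j hi hj => ?_⟩
    have hswap : ∀ k, k < (a :: b :: v).length → Equiv.swap 0 1 k < (a :: b :: v).length := by
      intro k hk
      rcases eq_or_ne k 0 with rfl | h0
      · simp
      rcases eq_or_ne k 1 with rfl | h1
      · simp
      rwa [Equiv.swap_apply_of_ne_of_ne h0 h1]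
    simp only [getD_swap_head a b, getD_swap_head c d]
    exact hcmp _ _ (hswap i (by simpa using hi)) (hswap j (by simpa using hj))

theorem not_avoidsSet_swap (hhat : ∀ σ ∈ T, hat σ ∈ T) {x z : ℕ} {S : List ℕ}
    (hz : AvoidsSet T (z :: S)) (hx : AvoidsSet T (x :: S)) (hxz : ¬AvoidsSet T (x :: z :: S)) :
    ¬AvoidsSet T (z :: x :: S) := by
  intro hzx
  obtain ⟨σ, hσ, u, hu, hiso⟩ : ∃ σ ∈ T, Contains (x :: z :: S) σ := by
    simpa [AvoidsSet] using hxz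
  cases hu with
  | cons _ hu => exact hz σ hσ ⟨u, hu, hiso⟩
  | cons_cons _ hu =>
    cases hu with
    | cons _ hu => exact hx σ hσ ⟨_, hu.cons_cons x, hiso⟩
    | cons_cons _ hu =>
      exact hzx (hat σ) (hhat σ hσ) ⟨_, (hu.cons_cons x).cons_cons z, hiso.swap_head⟩

theorem sTaux_nil (st out : List ℕ) : sTaux T [] st out = out ++ st :=
  sTaux.eq_1 T st out

theorem sTaux_push {x : ℕ} {st : List ℕ} (h : AvoidsSet T (x :: st)) (r out : List ℕ) :
    sTaux T (x :: r) st out = sTaux T r (x :: st) out := by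
  rw [sTaux.eq_def]; exact if_pos h

theorem sTaux_pop {x y : ℕ} {s : List ℕ} (h : ¬AvoidsSet T (x :: y :: s)) (r out : List ℕ) :
    sTaux T (x :: r) (y :: s) out = sTaux T (x :: r) s (out ++ [y]) := by
  rw [sTaux.eq_def]; exact if_neg h

theorem sTaux_cons_nil (x : ℕ) (r out : List ℕ) : sTaux T (x :: r) [] out = sTaux T r [x] out := by
  rw [sTaux.eq_2]; exact ite_self _

theorem sTaux_append_out (inp st pre out : List ℕ) :
    sTaux T inp st (pre ++ out) = pre ++ sTaux T inp st out := by
  induction inp, st, out using sTaux.induct T with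
  | case1 st out => simp [sTaux_nil]
  | case2 x r st out hx ih => rw [sTaux_push hx, sTaux_push hx, ih]
  | case3 x r out _ ih => rw [sTaux_cons_nil, sTaux_cons_nil, ih]
  | case4 x r out y s hxy ih => rw [sTaux_pop hxy, sTaux_pop hxy, append_assoc, ih]

theorem sTaux_perm (inp st out : List ℕ) : sTaux T inp st out ~ out ++ st ++ inp := by
  induction inp, st, out using sTaux.induct T with
  | case1 st out => simp [sTaux_nil]
  | case2 x r st out hx ih =>
    rw [sTaux_push hx]
    refine ih.trans ?_
    simpa using perm_middle.symm.append_left out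
  | case3 x r out _ ih => rw [sTaux_cons_nil]; simpa using ih
  | case4 x r out y s hxy ih => rw [sTaux_pop hxy]; simpa using ih

theorem sT_perm (w : List ℕ) : sT T w ~ w := by
  simpa [sT] using sTaux_perm (T := T) w [] []

theorem sTaux_append_of_avoidsSet (l st rest out : List ℕ) (h : AvoidsSet T (l.reverse ++ st)) :
    sTaux T (l ++ rest) st out = sTaux T rest (l.reverse ++ st) out := by
  induction l generalizing st with
  | nil => rfl
  | cons y l ih =>
    simp only [reverse_cons, append_assoc, singleton_append] at h ⊢
    rw [cons_append, sTaux_push (AvoidsSet.mono h (sublist_append_right _ _)), ih _ h]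

theorem sTaux_eq_of_forall_not_avoidsSet (h : ∀ x s, ¬AvoidsSet T (x :: s)) (inp st out : List ℕ) :
    sTaux T inp st out = out ++ st ++ inp := by
  induction inp, st, out using sTaux.induct T with
  | case1 st out => exact (sTaux_nil st out).trans (append_nil _).symm
  | case2 x r st out hx _ => exact absurd hx (h x st)
  | case3 x r out _ ih => rw [sTaux_cons_nil, ih]; simp
  | case4 x r out y s _ ih => rw [sTaux_pop (h x _), ih]; simp

theorem sT_eq_self_of_mem_of_length_le_one {p : List ℕ} (hp : p ∈ T) (hlen : p.length ≤ 1)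
    (w : List ℕ) : sT T w = w := by
  simpa [sT] using sTaux_eq_of_forall_not_avoidsSet
    (fun x s h => h p hp (contains_of_length_le_one hlen x s)) w [] []

/-- The backward run undoes the forward run on `inp` from `S`. The invariant `hblock` keeps the
two in step: if the forward run pushes the first letter of `inp`, the first letter of `rest` must
pop it again in the backward run. -/
theorem sTaux_reverse_sTaux (hhat : ∀ σ ∈ T, hat σ ∈ T) (hsingle : ∀ x, AvoidsSet T [x])
    (inp S rest acc : List ℕ) (hS : AvoidsSet T S)
    (hblock : ∀ x z, inp.head? = some x → rest.head? = some z →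
      AvoidsSet T (x :: S) → ¬AvoidsSet T (z :: x :: S)) :
    sTaux T ((sTaux T inp S []).reverse ++ rest) [] acc = sTaux T rest S (acc ++ inp.reverse) := by
  refine sTaux.induct T (motive := fun inp S _ => ∀ rest acc, AvoidsSet T S →
      (∀ x z, inp.head? = some x → rest.head? = some z →
        AvoidsSet T (x :: S) → ¬AvoidsSet T (z :: x :: S)) →
      sTaux T ((sTaux T inp S []).reverse ++ rest) [] acc = sTaux T rest S (acc ++ inp.reverse))
    ?nil ?push ?forcedPush ?pop inp S [] rest acc hS hblock
  case nil =>
    intro S _ rest acc hS _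
    rw [sTaux_nil, nil_append, sTaux_append_of_avoidsSet _ _ _ _ (by simpa using hS),
      reverse_reverse, append_nil, reverse_nil, append_nil]
  case push =>
    intro x r S _ hx ih rest acc _ hblock
    have hpop : ∀ z, rest.head? = some z → ¬AvoidsSet T (z :: x :: S) :=
      fun z hz => hblock x z rfl hz hx
    rw [sTaux_push hx, ih rest acc hx fun x' z _ hz _ h =>
      hpop z hz (h.mono ((sublist_cons_self x' _).cons_cons z))]
    match rest, hpop with
    | [], _ => simp [sTaux_nil]
    | z :: rest, hpop => rw [sTaux_pop (hpop z rfl)]; simp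
  case forcedPush => exact fun x _ _ hx _ _ _ _ _ => absurd (hsingle x) hx
  case pop =>
    intro x r _ y S hxy ih rest acc hS _
    have hout : sTaux T (x :: r) S [y] = y :: sTaux T (x :: r) S [] := sTaux_append_out _ _ [y] []
    simp only [sTaux_pop hxy, nil_append, hout, reverse_cons, append_assoc, singleton_append]
    rw [ih (y :: rest) acc (hS.mono (sublist_cons_self y S)) ?_, sTaux_push hS, reverse_cons]
    rintro x' z ⟨⟩ ⟨⟩ hx
    exact not_avoidsSet_swap hhat hS hx hxy

theorem sT_reverse_sT (hhat : ∀ σ ∈ T, hat σ ∈ T) (w : List ℕ) :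
    sT T (sT T w).reverse = w.reverse := by
  by_cases hdeg : ∃ p ∈ T, p.length ≤ 1
  · obtain ⟨p, hp, hlen⟩ := hdeg
    simp only [sT_eq_self_of_mem_of_length_le_one hp hlen]
  · push Not at hdeg
    have hsingle : ∀ x, AvoidsSet T [x] := fun x p hp hc => (hdeg p hp).not_ge hc.length_le
    simpa [sT, sTaux_nil] using
      sTaux_reverse_sTaux hhat hsingle w [] [] [] ((hsingle 0).mono (nil_sublist _)) (by simp)

end StackSorting

theorem IsPermList.of_perm {w w' : List ℕ} (h : w' ~ w) (hw : IsPermList w) : IsPermList w' := by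
  unfold IsPermList at *
  rw [h.length_eq]
  exact h.trans hw

theorem mapsTo_of_perm {f : List ℕ → List ℕ} (hf : ∀ w, f w ~ w) (n : ℕ) :
    Set.MapsTo f {w | IsPermList w ∧ w.length = n} {w | IsPermList w ∧ w.length = n} :=
  fun w ⟨hw, hn⟩ => ⟨hw.of_perm (hf w), (hf w).length_eq.trans hn⟩

theorem stmt3_general (T : Set (List ℕ))
    (hhat : ∀ σ ∈ T, hat σ ∈ T) (n : ℕ) :
    Set.BijOn (sT T) {w | IsPermList w ∧ w.length = n}
      {w | IsPermList w ∧ w.length = n} ∧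
    (∀ π : List ℕ, IsPermList π → π.length = n →
      (sT T ((sT T π).reverse)).reverse = π) ∧
    (∀ π : List ℕ, IsPermList π → π.length = n →
      sT T ((sT T π.reverse).reverse) = π) := by
  have hleft (π : List ℕ) : (sT T (sT T π).reverse).reverse = π := by
    rw [sT_reverse_sT hhat, reverse_reverse]
  have hright (π : List ℕ) : sT T (sT T π.reverse).reverse = π := by
    simpa using sT_reverse_sT hhat π.reverse
  have hinv_perm (π : List ℕ) : (sT T π.reverse).reverse ~ π :=
    (reverse_perm _).trans ((sT_perm _).trans (reverse_perm _))
  refine ⟨Set.InvOn.bijOn ⟨fun π _ => hleft π, fun π _ => hright π⟩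
    (mapsTo_of_perm sT_perm n) (mapsTo_of_perm hinv_perm n),
    fun π _ _ => hleft π, fun π _ _ => hright π⟩

/-- If `T` is reduced and closed under `σ ↦ σ̂`, then `s_T` is a bijection on `S_n`
with inverse `r ∘ s_T ∘ r`. -/
theorem stmt3 (T : Set (List ℕ)) (hred : Reduced T)
    (hhat : ∀ σ ∈ T, hat σ ∈ T) (n : ℕ) :
    Set.BijOn (sT T) {w | IsPermList w ∧ w.length = n}
      {w | IsPermList w ∧ w.length = n} ∧
    (∀ π : List ℕ, IsPermList π → π.length = n →
      (sT T ((sT T π).reverse)).reverse = π) ∧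
    (∀ π : List ℕ, IsPermList π → π.length = n →
      sT T ((sT T π.reverse).reverse) = π) :=
  stmt3_general T hhat n
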